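/- arXiv:2503.08374 — 6 statements merged into one kernel-verified Lean document; each statement's English description precedes it below -/
import Mathlib

section
/- The sequence n ↦ δ_n is strictly increasing on the integers n ≥ 2, i.e. for all integers 2 ≤ m < n one has δ_m < δ_n. -/
/-- `δ_n = (1/(4n))·∑_{l=1}^{n−1} 1/sin(πl/n) − 1`. -/
noncomputable def deltaN (n : ℕ) : ℝ :=
  (1 / (4 * (n : ℝ))) * ∑ l ∈ Finset.Icc 1 (n - 1), 1 / Real.sin (Real.pi * l / n) - 1

/-- `h_n(x,θ) = (1/n)·∑_{l=1}^{n} (1 − x·cos(2πl/n + θ))/(1 + x² − 2x·cos(2πl/n + θ))^{3/2}`. -/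
noncomputable def hN (n : ℕ) (x θ : ℝ) : ℝ :=
  (1 / (n : ℝ)) * ∑ l ∈ Finset.Icc 1 n,
    (1 - x * Real.cos (2 * Real.pi * l / n + θ)) /
      (1 + x ^ 2 - 2 * x * Real.cos (2 * Real.pi * l / n + θ)) ^ ((3 : ℝ) / 2)

/-- `k_n(x,θ) = h_n(x,θ) − 1`. -/
noncomputable def kN (n : ℕ) (x θ : ℝ) : ℝ := hN n x θ - 1

/-!
Write `S_n = ∑_{l=1}^{n-1} csc(πl/n)`, so that `δ_n = S_n/(4n) - 1`; it suffices that `S_n/n`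
increases. The point `πl/n` is the convex combination of `πl/(n+1)` and `π(l+1)/(n+1)` with
weights `(n-l)/n` and `l/n`, and `csc` is convex on `(0, π)` (the reciprocal of the positive
concave function `sin`). Summing over `l`, the weights collect into `n S_n ≤ (n-1) S_{n+1}`,
and `(n-1)(n+1) < n²` finishes.
-/

open Real Finset

theorem ConcaveOn.convexOn_inv {𝕜 E : Type*} [Field 𝕜] [LinearOrder 𝕜] [IsStrictOrderedRing 𝕜]
    [AddCommMonoid E] [Module 𝕜 E] {s : Set E} {f : E → 𝕜} (hf : ConcaveOn 𝕜 s f)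
    (hpos : ∀ x ∈ s, 0 < f x) : ConvexOn 𝕜 s f⁻¹ := by
  refine ⟨hf.1, fun x hx y hy a b ha hb hab => ?_⟩
  have hcomb : 0 < a • f x + b • f y := convex_Ioi 0 (hpos x hx) (hpos y hy) ha hb hab
  calc (f (a • x + b • y))⁻¹ ≤ (a • f x + b • f y)⁻¹ := inv_anti₀ hcomb (hf.2 hx hy ha hb hab)
    _ ≤ a • (f x)⁻¹ + b • (f y)⁻¹ := by
      simpa only [zpow_neg_one] using (convexOn_zpow (-1)).2 (hpos x hx) (hpos y hy) ha hb hab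

theorem convexOn_inv_sin : ConvexOn ℝ (Set.Ioo 0 π) fun x => (sin x)⁻¹ :=
  (strictConcaveOn_sin_Icc.concaveOn.subset Set.Ioo_subset_Icc_self (convex_Ioo 0 π)).convexOn_inv
    fun _ hx => sin_pos_of_pos_of_lt_pi hx.1 hx.2

theorem pi_mul_div_mem_Ioo {l n : ℕ} (hl : 0 < l) (hln : l < n) :
    π * l / n ∈ Set.Ioo 0 π := by
  have hl' : (0 : ℝ) < l := by exact_mod_cast hl
  have hln' : (l : ℝ) < n := by exact_mod_cast hln
  refine ⟨div_pos (mul_pos pi_pos hl') (hl'.trans hln'), ?_⟩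
  rw [div_lt_iff₀ (hl'.trans hln')]
  nlinarith [pi_pos]

theorem natCast_mul_inv_sin_le {l n : ℕ} (hl : 0 < l) (hln : l < n) :
    n * (sin (π * l / n))⁻¹ ≤
      (n - l) * (sin (π * l / (n + 1)))⁻¹ + l * (sin (π * (l + 1) / (n + 1)))⁻¹ := by
  have hn : (0 : ℝ) < n := by exact_mod_cast hl.trans hln
  have hln' : (l : ℝ) ≤ n := by exact_mod_cast hln.le
  have hx := pi_mul_div_mem_Ioo hl (hln.trans n.lt_succ_self)
  have hy := pi_mul_div_mem_Ioo l.succ_pos (Nat.succ_lt_succ hln)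
  push_cast at hx hy
  have hconv := convexOn_inv_sin.2 hx hy (div_nonneg (sub_nonneg.2 hln') hn.le)
    (div_nonneg l.cast_nonneg hn.le) (by field_simp; ring)
  have harg : (n - l) / n * (π * l / (n + 1)) + l / n * (π * (l + 1) / (n + 1)) = π * l / n := by
    field_simp
    ring
  simp only [smul_eq_mul, harg] at hconv
  calc (n : ℝ) * (sin (π * l / n))⁻¹
      ≤ n * ((n - l) / n * (sin (π * l / (n + 1)))⁻¹ + l / n * (sin (π * (l + 1) / (n + 1)))⁻¹) :=
        mul_le_mul_of_nonneg_left hconv hn.le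
    _ = _ := by field_simp

theorem sum_Icc_mul_add_mul_succ {R : Type*} [CommRing R] (f : ℕ → R) (n : ℕ) :
    ∑ l ∈ Icc 1 n, (((n : R) + 1 - l) * f l + l * f (l + 1)) = n * ∑ l ∈ Icc 1 (n + 1), f l := by
  induction n with
  | zero => simp
  | succ n ih =>
    have hsplit : ∑ l ∈ Icc 1 n, ((((n + 1 : ℕ) : R) + 1 - l) * f l + l * f (l + 1)) =
        ∑ l ∈ Icc 1 n, (((n : R) + 1 - l) * f l + l * f (l + 1)) + ∑ l ∈ Icc 1 n, f l := by
      rw [← sum_add_distrib]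
      exact sum_congr rfl fun l _ => by push_cast; ring
    rw [sum_Icc_succ_top (by omega : 1 ≤ n + 1), hsplit, ih,
      sum_Icc_succ_top (by omega : 1 ≤ n + 1 + 1), sum_Icc_succ_top (by omega : 1 ≤ n + 1)]
    push_cast
    ring

noncomputable def cscSum (n : ℕ) : ℝ := ∑ l ∈ Icc 1 (n - 1), (sin (π * l / n))⁻¹

theorem deltaN_eq (n : ℕ) : deltaN n = cscSum n / (4 * n) - 1 := by
  simp only [deltaN, cscSum, one_div]
  ring

theorem cscSum_pos {n : ℕ} (hn : 2 ≤ n) : 0 < cscSum n :=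
  sum_pos (fun l hl => by
      rw [mem_Icc] at hl
      exact inv_pos.2 (sin_pos_of_mem_Ioo (pi_mul_div_mem_Ioo hl.1 (by omega))))
    ⟨1, mem_Icc.2 ⟨le_rfl, by omega⟩⟩

theorem natCast_mul_cscSum_le (n : ℕ) : n * cscSum n ≤ (n - 1) * cscSum (n + 1) := by
  cases n with
  | zero => simp [cscSum]
  | succ n =>
    calc ((n + 1 : ℕ) : ℝ) * cscSum (n + 1)
        = ∑ l ∈ Icc 1 n, ((n + 1 : ℕ) : ℝ) * (sin (π * l / (n + 1 : ℕ)))⁻¹ := by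
          rw [cscSum, mul_sum, Nat.add_sub_cancel]
      _ ≤ ∑ l ∈ Icc 1 n, (((n : ℝ) + 1 - l) * (sin (π * l / (n + 1 + 1 : ℕ)))⁻¹ +
            l * (sin (π * (l + 1 : ℕ) / (n + 1 + 1 : ℕ)))⁻¹) := sum_le_sum fun l hl => by
          rw [mem_Icc] at hl
          have := natCast_mul_inv_sin_le (n := n + 1) hl.1 (by omega)
          push_cast at this ⊢
          exact this
      _ = ((n + 1 : ℕ) - 1) * cscSum (n + 1 + 1) := by
          rw [sum_Icc_mul_add_mul_succ (fun l => (sin (π * l / (n + 1 + 1 : ℕ)))⁻¹), cscSum,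
            Nat.add_sub_cancel]
          push_cast
          ring

theorem cscSum_div_lt {n : ℕ} (hn : 2 ≤ n) : cscSum n / n < cscSum (n + 1) / (n + 1) := by
  have hn' : (2 : ℝ) ≤ n := by exact_mod_cast hn
  have hmono := natCast_mul_cscSum_le n
  have hpos := cscSum_pos (n := n + 1) (by omega)
  rw [div_lt_div_iff₀ (by positivity) (by positivity)]
  nlinarith [mul_le_mul_of_nonneg_right hmono (by positivity : (0 : ℝ) ≤ n + 1)]

theorem deltaN_lt_deltaN_succ {n : ℕ} (hn : 2 ≤ n) : deltaN n < deltaN (n + 1) := by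
  have := cscSum_div_lt hn
  rw [deltaN_eq, deltaN_eq, Nat.cast_succ, mul_comm 4, mul_comm 4, ← div_div, ← div_div]
  linarith [div_lt_div_of_pos_right this (by norm_num : (0 : ℝ) < 4)]

/-- The sequence `n ↦ δ_n` is strictly increasing on the integers `n ≥ 2`. -/
theorem deltaN_strictMono : ∀ m n : ℕ, 2 ≤ m → m < n → deltaN m < deltaN n :=
  fun _ _ hm hmn =>
    Nat.rel_of_forall_rel_succ_of_le_of_lt (· < ·) (fun _ => deltaN_lt_deltaN_succ) hm hmn
end

section
/- For every integer n with 2 ≤ n ≤ 472 one has δ_n < 0, and for every integer n ≥ 473 one has δ_n > 0. In particular δ_n ≠ 0 for every integer n ≥ 2. -/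
open Real Finset
open scoped Nat

def sinTaylor {K : Type*} [Field K] (k : ℕ) (x : K) : K :=
  ∑ i ∈ range k, (-1) ^ i * x ^ (2 * i + 1) / (2 * i + 1)!

def cosTaylor {K : Type*} [Field K] (k : ℕ) (x : K) : K :=
  ∑ i ∈ range k, (-1) ^ i * x ^ (2 * i) / (2 * i)!

@[simp, norm_cast]
lemma Rat.cast_sinTaylor (k : ℕ) (q : ℚ) : ((sinTaylor k q : ℚ) : ℝ) = sinTaylor k (q : ℝ) := by
  simp [sinTaylor]

lemma hasDerivAt_sinTaylor (k : ℕ) (x : ℝ) : HasDerivAt (sinTaylor k) (cosTaylor k x) x := by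
  refine (HasDerivAt.fun_sum fun i _ =>
    ((hasDerivAt_pow (2 * i + 1) x).const_mul ((-1 : ℝ) ^ i)).div_const
      ((2 * i + 1)! : ℝ)).congr_deriv (sum_congr rfl fun i _ => ?_)
  rw [Nat.factorial_succ]
  push_cast
  field_simp

lemma hasDerivAt_cosTaylor_succ (k : ℕ) (x : ℝ) :
    HasDerivAt (cosTaylor (k + 1)) (-sinTaylor k x) x := by
  have hcos : cosTaylor (k + 1) =
      fun y : ℝ => ∑ i ∈ range k, (-1) ^ (i + 1) * y ^ (2 * i + 2) / (2 * i + 2)! + 1 := by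
    ext y; simp [cosTaylor, sum_range_succ', mul_add]
  rw [hcos, sinTaylor, ← sum_neg_distrib]
  refine ((HasDerivAt.fun_sum fun i _ =>
    ((hasDerivAt_pow (2 * i + 2) x).const_mul ((-1 : ℝ) ^ (i + 1))).div_const
      ((2 * i + 2)! : ℝ)).add_const 1).congr_deriv (sum_congr rfl fun i _ => ?_)
  rw [Nat.factorial_succ]
  push_cast
  field_simp
  ring

lemma nonneg_of_hasDerivAt_of_nonneg {f f' : ℝ → ℝ} (hf : ∀ x, HasDerivAt f (f' x) x)
    (h₀ : f 0 = 0) (hf' : ∀ x, 0 ≤ x → 0 ≤ f' x) {x : ℝ} (hx : 0 ≤ x) : 0 ≤ f x := by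
  have hmono : MonotoneOn f (Set.Ici 0) :=
    monotoneOn_of_hasDerivWithinAt_nonneg (convex_Ici 0)
      (fun y _ => (hf y).continuousAt.continuousWithinAt) (fun y _ => (hf y).hasDerivWithinAt)
      (fun y hy => hf' y (interior_subset hy))
  simpa [h₀] using hmono Set.self_mem_Ici hx hx

/-- Both families are proved together: each inequality is the previous one integrated from `0`. -/
theorem neg_one_pow_mul_taylor_sub_nonneg (k : ℕ) {x : ℝ} (hx : 0 ≤ x) :
    0 ≤ (-1) ^ k * (cosTaylor (k + 1) x - cos x) ∧
      0 ≤ (-1) ^ k * (sinTaylor (k + 1) x - sin x) := by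
  induction k generalizing x with
  | zero => simpa [cosTaylor, sinTaylor] using ⟨cos_le_one x, sin_le hx⟩
  | succ k ih =>
    have hcos {y : ℝ} (hy : 0 ≤ y) : 0 ≤ (-1) ^ (k + 1) * (cosTaylor (k + 2) y - cos y) :=
      nonneg_of_hasDerivAt_of_nonneg
        (f := fun y => (-1) ^ (k + 1) * (cosTaylor (k + 2) y - cos y))
        (fun y => (((hasDerivAt_cosTaylor_succ (k + 1) y).sub (hasDerivAt_cos y)).const_mul
          _).congr_deriv (by ring))
        (by simp [cosTaylor, sum_range_succ']) (fun y hy => (ih hy).2) hy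
    exact ⟨hcos hx, nonneg_of_hasDerivAt_of_nonneg
      (f := fun y => (-1) ^ (k + 1) * (sinTaylor (k + 2) y - sin y))
      (fun y => ((hasDerivAt_sinTaylor (k + 2) y).sub (hasDerivAt_sin y)).const_mul _)
      (by simp [sinTaylor]) (fun y hy => hcos hy) hx⟩

theorem sinTaylor_two_mul_add_two_le_sin (k : ℕ) {x : ℝ} (hx : 0 ≤ x) :
    sinTaylor (2 * k + 2) x ≤ sin x := by
  have := (neg_one_pow_mul_taylor_sub_nonneg (2 * k + 1) hx).2
  rw [pow_succ, pow_mul] at this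
  norm_num at this
  linarith

theorem sin_le_sinTaylor_two_mul_add_one (k : ℕ) {x : ℝ} (hx : 0 ≤ x) :
    sin x ≤ sinTaylor (2 * k + 1) x := by
  have := (neg_one_pow_mul_taylor_sub_nonneg (2 * k) hx).2
  rw [pow_mul] at this
  norm_num at this
  linarith

lemma sinTaylor_four_pos {x : ℝ} (h₀ : 0 < x) (h₂ : x ≤ 2) : 0 < sinTaylor 4 x := by
  have hx : sinTaylor 4 x = x * (1 - x ^ 2 / 6 + x ^ 4 / 120 - x ^ 6 / 5040) := by
    simp [sinTaylor, sum_range_succ, Nat.factorial]; ring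
  have ht : x ^ 2 ≤ 4 := by nlinarith
  rw [hx]
  exact mul_pos h₀ (by nlinarith [pow_nonneg (sq_nonneg x) 2, pow_le_pow_left₀ (sq_nonneg x) ht 3])

lemma one_div_sin_le_one_div_sinTaylor {x y : ℝ} (hy : 0 < y) (hyx : y ≤ x) (hx : x ≤ π / 2) :
    1 / sin x ≤ 1 / sinTaylor 4 y :=
  one_div_le_one_div_of_le (sinTaylor_four_pos hy (by linarith [pi_le_four]))
    ((sinTaylor_two_mul_add_two_le_sin 1 hy.le).trans
      (sin_le_sin_of_le_of_le_pi_div_two (by linarith [pi_pos]) hx hyx))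

lemma one_div_sinTaylor_le_one_div_sin {x y : ℝ} (hx : 0 < x) (hxy : x ≤ y) (hy : y ≤ π / 2) :
    1 / sinTaylor 5 y ≤ 1 / sin x :=
  one_div_le_one_div_of_le (sin_pos_of_pos_of_lt_pi hx (by linarith [pi_pos]))
    ((sin_le_sin_of_le_of_le_pi_div_two (by linarith [pi_pos]) hy hxy).trans
      (sin_le_sinTaylor_two_mul_add_one 2 (hx.le.trans hxy)))

lemma ConcaveOn.one_div {s : Set ℝ} {f : ℝ → ℝ} (hf : ConcaveOn ℝ s f)
    (hpos : ∀ x ∈ s, 0 < f x) : ConvexOn ℝ s (fun x => 1 / f x) := by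
  refine ⟨hf.1, fun x hx y hy a b ha hb hab => ?_⟩
  have hcomb : 0 < a • f x + b • f y := by
    rcases ha.eq_or_lt with rfl | ha
    · simp_all
    · exact add_pos_of_pos_of_nonneg (mul_pos ha (hpos x hx)) (mul_nonneg hb (hpos y hy).le)
  calc 1 / f (a • x + b • y) ≤ 1 / (a • f x + b • f y) :=
        one_div_le_one_div_of_le hcomb (hf.2 hx hy ha hb hab)
    _ ≤ a • (1 / f x) + b • (1 / f y) := by
        simpa [zpow_neg_one] using
          (convexOn_zpow (𝕜 := ℝ) (-1)).2 (hpos x hx) (hpos y hy) ha hb hab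

lemma concaveOn_sin_pi_mul : ConcaveOn ℝ (Set.Icc 0 1) (fun x => sin (π * x)) := by
  refine ⟨convex_Icc 0 1, fun x hx y hy a b ha hb hab => ?_⟩
  have hmem {z : ℝ} (hz : z ∈ Set.Icc (0 : ℝ) 1) : π * z ∈ Set.Icc 0 π :=
    ⟨by nlinarith [pi_pos, hz.1], by nlinarith [pi_pos, hz.2]⟩
  simpa [smul_eq_mul, mul_add, mul_left_comm] using
    strictConcaveOn_sin_Icc.concaveOn.2 (hmem hx) (hmem hy) ha hb hab

lemma convexOn_one_div_sin_pi_mul : ConvexOn ℝ (Set.Ioo 0 1) (fun x => 1 / sin (π * x)) :=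
  (concaveOn_sin_pi_mul.subset Set.Ioo_subset_Icc_self (convex_Ioo 0 1)).one_div fun x hx =>
    sin_pos_of_pos_of_lt_pi (by nlinarith [pi_pos, hx.1]) (by nlinarith [pi_pos, hx.2])

lemma sum_Icc_sub_mul_add_mul_succ (a : ℕ → ℝ) (m : ℕ) :
    ∑ l ∈ Icc 1 m, ((m + 1 - l) * a l + l * a (l + 1)) = m * ∑ l ∈ Icc 1 (m + 1), a l := by
  induction m with
  | zero => simp
  | succ m ih =>
    have hsplit : ∑ l ∈ Icc 1 (m + 1), ((((m + 1 : ℕ) : ℝ) + 1 - l) * a l + l * a (l + 1)) =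
        ∑ l ∈ Icc 1 (m + 1), (((m + 1 - l) * a l + l * a (l + 1)) + a l) := by
      refine sum_congr rfl fun l _ => ?_
      push_cast
      ring
    rw [hsplit, sum_add_distrib, sum_Icc_succ_top (by omega), ih,
      sum_Icc_succ_top (by omega : 1 ≤ m + 2)]
    push_cast
    ring

theorem ConvexOn.sum_Icc_le_mul_sum_Icc {f : ℝ → ℝ} (hf : ConvexOn ℝ (Set.Ioo 0 1) f) (n : ℕ) :
    ∑ l ∈ Icc 1 (n - 1), f (l / n) ≤ (n - 1) / n * ∑ l ∈ Icc 1 n, f (l / (n + 1)) := by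
  rcases n with _ | m
  · simp
  push_cast
  have hmem {l : ℕ} (h₁ : 1 ≤ l) (h₂ : l ≤ m + 1) :
      (l : ℝ) / (m + 1 + 1) ∈ Set.Ioo (0 : ℝ) 1 := by
    have : (1 : ℝ) ≤ l := by exact_mod_cast h₁
    have : (l : ℝ) ≤ m + 1 := by exact_mod_cast h₂
    constructor
    · positivity
    · rw [div_lt_one (by positivity)]; linarith
  have hpt (l : ℕ) (hl : l ∈ Icc 1 m) : f (l / (m + 1)) ≤
      ((m + 1 - l) * f (l / (m + 1 + 1)) + l * f ((l + 1 : ℕ) / (m + 1 + 1))) / (m + 1) := by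
    rw [mem_Icc] at hl
    have hl' : (l : ℝ) ≤ m := by exact_mod_cast hl.2
    have key := hf.2 (hmem hl.1 (by omega)) (hmem (by omega) (by omega : l + 1 ≤ m + 1))
      (show (0 : ℝ) ≤ (m + 1 - l) / (m + 1) by apply div_nonneg <;> linarith)
      (show (0 : ℝ) ≤ l / (m + 1) by positivity) (by field_simp; ring)
    simp only [smul_eq_mul] at key
    push_cast at key ⊢
    have harg : (m + 1 - l) / (m + 1) * (l / (m + 1 + 1)) + l / (m + 1) * ((l + 1) / (m + 1 + 1))
        = (l / (m + 1) : ℝ) := by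
      field_simp; ring
    rw [harg] at key
    exact key.trans_eq (by ring)
  calc ∑ l ∈ Icc 1 m, f (l / (m + 1))
      ≤ ∑ l ∈ Icc 1 m, ((m + 1 - l) * f (l / (m + 1 + 1)) +
          l * f ((l + 1 : ℕ) / (m + 1 + 1))) / (m + 1) := sum_le_sum hpt
    _ = (m + 1 - 1) / (m + 1) * ∑ l ∈ Icc 1 (m + 1), f (l / (m + 1 + 1)) := by
      rw [← sum_div, sum_Icc_sub_mul_add_mul_succ (fun l : ℕ => f (l / (m + 1 + 1))) m]
      ring

lemma deltaN_eq_s1 (n : ℕ) :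
    deltaN n = 1 / (4 * n) * ∑ l ∈ Icc 1 (n - 1), 1 / sin (π * (l / n)) - 1 := by
  simp only [deltaN, mul_div_assoc]

lemma deltaN_le_succ (n : ℕ) : deltaN n ≤ deltaN (n + 1) := by
  have hS := convexOn_one_div_sin_pi_mul.sum_Icc_le_mul_sum_Icc n
  have hS' : 0 ≤ ∑ l ∈ Icc 1 n, 1 / sin (π * (l / (n + 1))) := by
    refine sum_nonneg fun l hl =>
      one_div_nonneg.2 (sin_nonneg_of_nonneg_of_le_pi (by positivity) ?_)
    have : (l : ℝ) ≤ n := by exact_mod_cast (mem_Icc.1 hl).2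
    rw [mul_div_assoc']
    exact div_le_of_le_mul₀ (by positivity) pi_pos.le (by nlinarith [pi_pos])
  rw [deltaN_eq_s1, deltaN_eq_s1]
  push_cast
  simp only [sub_le_sub_iff_right]
  rcases n.eq_zero_or_pos with rfl | hn
  · simp
  have hn : (0 : ℝ) < n := by exact_mod_cast hn
  calc 1 / (4 * n) * ∑ l ∈ Icc 1 (n - 1), 1 / sin (π * (l / n))
      ≤ 1 / (4 * n) * ((n - 1) / n * ∑ l ∈ Icc 1 n, 1 / sin (π * (l / (n + 1)))) :=
        mul_le_mul_of_nonneg_left hS (by positivity)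
    _ ≤ 1 / (4 * (n + 1)) * ∑ l ∈ Icc 1 n, 1 / sin (π * (l / (n + 1))) := by
      rw [← mul_assoc]
      refine mul_le_mul_of_nonneg_right ?_ hS'
      rw [div_mul_div_comm, div_le_div_iff₀ (by positivity) (by positivity)]
      nlinarith

theorem deltaN_monotone : Monotone deltaN := monotone_nat_of_le_succ deltaN_le_succ

/-- Rounding to the grid `2⁻²⁴ ℤ` keeps the denominators in the certificate sums small. -/
def roundUp (r : ℚ) : ℚ := ⌈2 ^ 24 * r⌉ / 2 ^ 24

def roundDown (r : ℚ) : ℚ := ⌊2 ^ 24 * r⌋ / 2 ^ 24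

lemma le_roundUp (r : ℚ) : r ≤ roundUp r := by
  rw [roundUp, le_div_iff₀ (by positivity), mul_comm]
  exact Int.le_ceil _

lemma roundDown_le (r : ℚ) : roundDown r ≤ r := by
  rw [roundDown, div_le_iff₀ (by positivity), mul_comm]
  exact Int.floor_le _

def cscUpper (n m : ℕ) : ℚ := roundUp (1 / sinTaylor 4 (3141592 / 10 ^ 6 * (m : ℚ) / n))

def cscLower (n m : ℕ) : ℚ := roundDown (1 / sinTaylor 5 (3141593 / 10 ^ 6 * (m : ℚ) / n))

lemma one_div_sin_le_cscUpper {n m : ℕ} (hm : 0 < m) (hmn : 2 * m ≤ n) :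
    1 / sin (π * m / n) ≤ cscUpper n m := by
  have hm' : (0 : ℝ) < m := by exact_mod_cast hm
  have hn : (0 : ℝ) < n := by exact_mod_cast (by omega : 0 < n)
  have hmn' : 2 * (m : ℝ) ≤ n := by exact_mod_cast hmn
  calc 1 / sin (π * m / n) ≤ 1 / sinTaylor 4 (3141592 / 10 ^ 6 * m / n : ℝ) := by
        refine one_div_sin_le_one_div_sinTaylor (by positivity) ?_ ?_
        · gcongr; linarith [pi_gt_d6]
        · rw [div_le_div_iff₀ hn two_pos]; nlinarith [pi_pos]
    _ = ((1 / sinTaylor 4 (3141592 / 10 ^ 6 * m / n : ℚ) : ℚ) : ℝ) := by push_cast; rfl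
    _ ≤ cscUpper n m := by exact_mod_cast le_roundUp _

/-- `hmn` says that the rational point `3.141593 m / n ≥ π m / n` is at most `1.570796 < π / 2`. -/
lemma cscLower_le_one_div_sin {n m : ℕ} (hm : 0 < m) (hmn : 3141593 * m ≤ 1570796 * n) :
    cscLower n m ≤ 1 / sin (π * m / n) := by
  have hm' : (0 : ℝ) < m := by exact_mod_cast hm
  have hn : (0 : ℝ) < n := by exact_mod_cast (by omega : 0 < n)
  have hmn' : 3141593 * (m : ℝ) ≤ 1570796 * n := by exact_mod_cast hmn
  calc (cscLower n m : ℝ) ≤ ((1 / sinTaylor 5 (3141593 / 10 ^ 6 * m / n : ℚ) : ℚ) : ℝ) := by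
        exact_mod_cast roundDown_le _
    _ = 1 / sinTaylor 5 (3141593 / 10 ^ 6 * m / n : ℝ) := by push_cast; rfl
    _ ≤ 1 / sin (π * m / n) := by
        refine one_div_sinTaylor_le_one_div_sin (by positivity) ?_ ?_
        · gcongr; linarith [pi_lt_d6]
        · rw [div_le_div_iff₀ hn two_pos]; nlinarith [pi_gt_d6]

lemma sum_cscUpper_lt : ∑ l ∈ Icc 1 471, cscUpper 472 (min l (472 - l)) < 1888 := by
  decide +kernel

lemma lt_sum_cscLower : 1892 < ∑ l ∈ Icc 1 472, cscLower 473 (min l (473 - l)) := by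
  decide +kernel

lemma sin_pi_mul_min_div {n l : ℕ} (hl : l ≤ n) :
    sin (π * (min l (n - l) : ℕ) / n) = sin (π * l / n) := by
  rcases le_total l (n - l) with h | h
  · rw [min_eq_left h]
  rcases (Nat.zero_le n).eq_or_lt with rfl | hn
  · simp
  have hn : (n : ℝ) ≠ 0 := by positivity
  rw [min_eq_right h, Nat.cast_sub hl, mul_sub, sub_div, mul_div_cancel_right₀ _ hn, sin_pi_sub]

lemma sum_one_div_sin_472_lt : ∑ l ∈ Icc (1 : ℕ) 471, 1 / sin (π * l / 472) < 1888 := by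
  calc ∑ l ∈ Icc (1 : ℕ) 471, 1 / sin (π * l / 472)
      = ∑ l ∈ Icc (1 : ℕ) 471, 1 / sin (π * (min l (472 - l) : ℕ) / (472 : ℕ)) := by
        refine sum_congr rfl fun l hl => ?_
        rw [sin_pi_mul_min_div (by simp at hl; omega)]
        norm_num
    _ ≤ ∑ l ∈ Icc 1 471, (cscUpper 472 (min l (472 - l)) : ℝ) :=
        sum_le_sum fun l hl => one_div_sin_le_cscUpper (by simp at hl; omega) (by omega)
    _ < 1888 := by exact_mod_cast sum_cscUpper_lt

lemma lt_sum_one_div_sin_473 : 1892 < ∑ l ∈ Icc (1 : ℕ) 472, 1 / sin (π * l / 473) := by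
  calc (1892 : ℝ) < ∑ l ∈ Icc 1 472, (cscLower 473 (min l (473 - l)) : ℝ) := by
        exact_mod_cast lt_sum_cscLower
    _ ≤ ∑ l ∈ Icc (1 : ℕ) 472, 1 / sin (π * (min l (473 - l) : ℕ) / (473 : ℕ)) :=
        sum_le_sum fun l hl => cscLower_le_one_div_sin (by simp at hl; omega) (by omega)
    _ = ∑ l ∈ Icc (1 : ℕ) 472, 1 / sin (π * l / 473) := by
        refine sum_congr rfl fun l hl => ?_
        rw [sin_pi_mul_min_div (by simp at hl; omega)]
        norm_num

lemma deltaN_472_neg : deltaN 472 < 0 := by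
  have := sum_one_div_sin_472_lt
  norm_num [deltaN] at this ⊢
  linarith

lemma deltaN_473_pos : 0 < deltaN 473 := by
  have := lt_sum_one_div_sin_473
  norm_num [deltaN] at this ⊢
  linarith

/-- `δ_n < 0` for `2 ≤ n ≤ 472`, `δ_n > 0` for `n ≥ 473`; in particular `δ_n ≠ 0`
for every integer `n ≥ 2`. -/
theorem deltaN_sign :
    (∀ n : ℕ, 2 ≤ n → n ≤ 472 → deltaN n < 0) ∧
    (∀ n : ℕ, 473 ≤ n → 0 < deltaN n) ∧
    (∀ n : ℕ, 2 ≤ n → deltaN n ≠ 0) := by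
  have hneg (n : ℕ) (h : n ≤ 472) : deltaN n < 0 := (deltaN_monotone h).trans_lt deltaN_472_neg
  have hpos (n : ℕ) (h : 473 ≤ n) : 0 < deltaN n := deltaN_473_pos.trans_le (deltaN_monotone h)
  refine ⟨fun n _ h => hneg n h, hpos, fun n _ => ?_⟩
  rcases le_or_gt n 472 with h | h
  · exact (hneg n h).ne
  · exact (hpos n h).ne'
end

section
/- For every integer n ≥ 2, every real x with 0 ≤ x < 1 and every θ ∈ ℝ, one has V_n(x,θ) = (1/π)·∫₀¹ ((1−τ)τ)^{−1/2} · (1 − x²τ)^{−1/2} · (1 − (xτ)^{2n})/(1 + (xτ)^{2n} − 2(xτ)^n·cos(nθ)) dτ. -/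
/-- `V_n(x,θ) = (1/n)·∑_{j=1}^{n} (1 + x² − 2x·cos(2πj/n + θ))^{−1/2}`. -/
noncomputable def VN (n : ℕ) (x θ : ℝ) : ℝ :=
  (1 / (n : ℝ)) * ∑ j ∈ Finset.Icc 1 n,
    (1 + x ^ 2 - 2 * x * Real.cos (2 * Real.pi * j / n + θ)) ^ (-(1 : ℝ) / 2)

/-!
For `|x| < 1` and `|c| ≤ 1` put `D = 1 + x² - 2xc` and `q(τ) = 1 + (xτ)² - 2xτc`. Then
`τ ↦ arcsin (2Dτ / q(τ) - 1) / √D` runs from `-π / (2√D)` to `π / (2√D)` on `[0, 1]` and its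
derivative is `((1-τ)τ)^{-1/2} (1-x²τ)^{-1/2} (1-(xτ)²) / q(τ)`, a weight times the Poisson kernel
`P_r(c) = (1-r²) / (1+r²-2rc)` at `r = xτ`. This writes every term of `V_n` as an integral, and
averaging the Poisson kernel over the `n` rotated angles `2πj/n + θ` gives `P_{rⁿ}(cos nθ)`, since
`∑_j 1 / (1 - wζʲ) = n / (1 - wⁿ)` for a primitive `n`-th root of unity `ζ`.
-/

open Finset Real

theorem IsPrimitiveRoot.sum_pow_pow_eq_ite {K : Type*} [CommRing K] [IsDomain K] {ζ : K}
    {n k : ℕ} (hζ : IsPrimitiveRoot ζ n) (hk : k < n) :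
    ∑ j ∈ range n, (ζ ^ k) ^ j = if k = 0 then (n : K) else 0 := by
  split_ifs with hk0
  · simp [hk0]
  · have hne : ζ ^ k ≠ 1 := hζ.pow_ne_one_of_pos_of_lt hk0 hk
    have hroot : (ζ ^ k) ^ n = 1 := by
      rw [← pow_mul, mul_comm, pow_mul, hζ.pow_eq_one, one_pow]
    exact mul_left_cancel₀ (sub_ne_zero.2 hne) (by rw [mul_geom_sum, hroot, sub_self, mul_zero])

theorem IsPrimitiveRoot.sum_inv_one_sub_mul_pow {K : Type*} [Field K] {ζ : K} {n : ℕ}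
    (hζ : IsPrimitiveRoot ζ n) {w : K} (hw : w ^ n ≠ 1) :
    ∑ j ∈ range n, (1 - w * ζ ^ j)⁻¹ = n / (1 - w ^ n) := by
  have hw' : 1 - w ^ n ≠ 0 := sub_ne_zero.2 (Ne.symm hw)
  have hterm (j : ℕ) :
      (1 - w * ζ ^ j)⁻¹ = (∑ k ∈ range n, w ^ k * (ζ ^ k) ^ j) / (1 - w ^ n) := by
    have hprod : (1 - w * ζ ^ j) * ∑ k ∈ range n, w ^ k * (ζ ^ k) ^ j = 1 - w ^ n :=
      calc (1 - w * ζ ^ j) * ∑ k ∈ range n, w ^ k * (ζ ^ k) ^ j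
          = (1 - w * ζ ^ j) * ∑ k ∈ range n, (w * ζ ^ j) ^ k := by
            simp_rw [mul_pow, ← pow_mul, mul_comm j]
        _ = 1 - w ^ n := by
            rw [mul_neg_geom_sum, mul_pow, ← pow_mul, mul_comm j, pow_mul, hζ.pow_eq_one,
              one_pow, mul_one]
    rw [eq_div_iff hw', ← hprod, inv_mul_cancel_left₀ (left_ne_zero_of_mul (hprod ▸ hw'))]
  simp_rw [hterm, ← sum_div]
  rw [sum_comm]
  simp_rw [← mul_sum]
  rw [sum_congr rfl fun k hk => by rw [hζ.sum_pow_pow_eq_ite (mem_range.1 hk)]]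
  rcases n.eq_zero_or_pos with rfl | hn <;> simp [*]

theorem IsPrimitiveRoot.sum_poissonKernel_mul_pow {ζ : ℂ} {n : ℕ} (hζ : IsPrimitiveRoot ζ n)
    {w : ℂ} (hw : ‖w‖ < 1) :
    ∑ j ∈ range n, poissonKernel 0 (w * ζ ^ j) 1 = n * poissonKernel 0 (w ^ n) 1 := by
  rcases n.eq_zero_or_pos with rfl | hn
  · simp
  have hζ1 : ‖ζ‖ = 1 := hζ.norm'_eq_one hn.ne'
  have hwn : ‖w ^ n‖ < 1 := by rw [norm_pow]; exact pow_lt_one₀ (norm_nonneg w) hw hn.ne'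
  have herglotz (u : ℂ) (hu : ‖u‖ < 1) : herglotzRieszKernel 0 u 1 = 2 * (1 - u)⁻¹ - 1 := by
    have hu1 : 1 - u ≠ 0 := sub_ne_zero.2 fun h => by simp [← h] at hu
    rw [herglotzRieszKernel_def, sub_zero, sub_zero, div_eq_iff hu1, sub_mul, mul_assoc,
      inv_mul_cancel₀ hu1]
    ring
  simp_rw [poissonKernel_eq_re_herglotzRieszKernel, Function.comp_apply]
  rw [← Complex.re_sum, ← Complex.re_ofReal_mul]
  congr 1
  rw [sum_congr rfl fun j _ => herglotz _ (by rwa [norm_mul, norm_pow, hζ1, one_pow, mul_one]),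
    herglotz _ hwn, sum_sub_distrib, ← mul_sum,
    hζ.sum_inv_one_sub_mul_pow fun h => by simp [h] at hwn]
  simp only [sum_const, card_range, nsmul_eq_mul, mul_one, Complex.ofReal_natCast]
  ring

theorem Finset.sum_Icc_one_comp_pow {M K : Type*} [AddCancelCommMonoid M] [Monoid K] {ζ : K}
    {n : ℕ} (hζ : ζ ^ n = 1) (f : K → M) :
    ∑ j ∈ Icc 1 n, f (ζ ^ j) = ∑ j ∈ range n, f (ζ ^ j) := by
  have hshift := sum_range_succ' (fun j => f (ζ ^ j)) n
  rw [sum_range_succ, pow_zero, ← hζ, add_left_inj] at hshift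
  rw [hshift, ← Ico_add_one_right_eq_Icc, sum_Ico_eq_sum_range, Nat.add_sub_cancel]
  simp_rw [add_comm 1]

lemma one_add_sq_sub_two_mul_pos {r c : ℝ} (hr : |r| < 1) (hc : |c| ≤ 1) :
    0 < 1 + r ^ 2 - 2 * r * c := by
  have hrc : r * c ≤ |r| :=
    calc r * c ≤ |r| * |c| := (le_abs_self _).trans (abs_mul r c).le
      _ ≤ |r| := mul_le_of_le_one_right (abs_nonneg r) hc
  nlinarith [sq_abs r, abs_nonneg r]

lemma poissonKernel_zero_ofReal_mul_exp_one (r φ : ℝ) :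
    poissonKernel 0 (r * Complex.exp (φ * Complex.I)) 1
      = (1 - r ^ 2) / (1 + r ^ 2 - 2 * r * cos φ) := by
  have hnormSq : Complex.normSq (1 - r * Complex.exp (φ * Complex.I))
      = 1 + r ^ 2 - 2 * r * cos φ := by
    rw [Complex.normSq_apply]
    simp only [Complex.sub_re, Complex.sub_im, Complex.one_re, Complex.one_im,
      Complex.re_ofReal_mul, Complex.im_ofReal_mul, Complex.exp_ofReal_mul_I_re,
      Complex.exp_ofReal_mul_I_im]
    nlinarith [sin_sq_add_cos_sq φ]
  rw [poissonKernel_def]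
  simp only [sub_zero]
  rw [← Complex.normSq_eq_norm_sq (1 - _), hnormSq]
  simp [Complex.norm_exp_ofReal_mul_I]

theorem sum_Icc_poisson_eq_mul_poisson_pow {n : ℕ} (hn : n ≠ 0) {r : ℝ} (hr : |r| < 1) (θ : ℝ) :
    ∑ j ∈ Icc 1 n, (1 - r ^ 2) / (1 + r ^ 2 - 2 * r * cos (2 * π * j / n + θ))
      = n * ((1 - (r ^ n) ^ 2) / (1 + (r ^ n) ^ 2 - 2 * r ^ n * cos (n * θ))) := by
  have hζ := Complex.isPrimitiveRoot_exp n hn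
  set w : ℂ := r * Complex.exp (θ * Complex.I) with hw_def
  have hw : ‖w‖ < 1 := by simpa [w, Complex.norm_exp_ofReal_mul_I] using hr
  have hwn : w ^ n = (r ^ n : ℝ) * Complex.exp ((n * θ : ℝ) * Complex.I) := by
    push_cast
    rw [mul_pow, ← Complex.exp_nat_mul]
    ring_nf
  have hrot (j : ℕ) : r * Complex.exp ((2 * π * j / n + θ : ℝ) * Complex.I)
      = w * Complex.exp (2 * π * Complex.I / n) ^ j := by
    rw [← Complex.exp_nat_mul, hw_def, mul_assoc (r : ℂ), ← Complex.exp_add]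
    congr 2
    push_cast
    field_simp
    ring
  simp_rw [← poissonKernel_zero_ofReal_mul_exp_one, hrot, ← hwn]
  rw [sum_Icc_one_comp_pow hζ.pow_eq_one fun z => poissonKernel 0 (w * z) 1,
    hζ.sum_poissonKernel_mul_pow hw]

lemma rpow_neg_one_div_two_eq_inv_sqrt {a : ℝ} (ha : 0 ≤ a) : a ^ (-(1 : ℝ) / 2) = (√a)⁻¹ := by
  rw [neg_div, rpow_neg ha, sqrt_eq_rpow]

section ArcsinIntegral

variable {x c : ℝ}

lemma abs_mul_lt_one_of_mem_Icc (hx : |x| < 1) {τ : ℝ} (hτ : τ ∈ Set.Icc (0 : ℝ) 1) :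
    |x * τ| < 1 := by
  rw [abs_mul, abs_of_nonneg hτ.1]
  nlinarith [abs_nonneg x, hτ.2]

lemma continuousOn_arcsin_poisson (hx : |x| < 1) (hc : |c| ≤ 1) :
    ContinuousOn
      (fun t => arcsin (2 * (1 + x ^ 2 - 2 * x * c) * t / (1 + (x * t) ^ 2 - 2 * (x * t) * c) - 1))
      (Set.Icc 0 1) :=
  continuous_arcsin.comp_continuousOn <| ((continuousOn_const.mul continuousOn_id).div
    (by fun_prop) fun _ ht =>
      (one_add_sq_sub_two_mul_pos (abs_mul_lt_one_of_mem_Icc hx ht) hc).ne').sub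
    continuousOn_const

lemma hasDerivAt_arcsin_poisson (hx : |x| < 1) (hc : |c| ≤ 1) {τ : ℝ}
    (hτ : τ ∈ Set.Ioo (0 : ℝ) 1) :
    HasDerivAt
      (fun t => arcsin (2 * (1 + x ^ 2 - 2 * x * c) * t / (1 + (x * t) ^ 2 - 2 * (x * t) * c) - 1))
      (√(1 + x ^ 2 - 2 * x * c) *
        (((1 - τ) * τ) ^ (-(1 : ℝ) / 2) * (1 - x ^ 2 * τ) ^ (-(1 : ℝ) / 2) *
          ((1 - (x * τ) ^ 2) / (1 + (x * τ) ^ 2 - 2 * (x * τ) * c)))) τ := by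
  obtain ⟨hτ0, hτ1⟩ := hτ
  set D := 1 + x ^ 2 - 2 * x * c
  set q := 1 + (x * τ) ^ 2 - 2 * (x * τ) * c
  have hD : 0 < D := one_add_sq_sub_two_mul_pos hx hc
  have hq : 0 < q := one_add_sq_sub_two_mul_pos (abs_mul_lt_one_of_mem_Icc hx ⟨hτ0.le, hτ1.le⟩) hc
  have hA : 0 < (1 - τ) * τ := mul_pos (by linarith) hτ0
  have hB : 0 < 1 - x ^ 2 * τ := by nlinarith [sq_abs x, abs_nonneg x]
  set g := 2 * D * τ / q - 1
  have hg' : HasDerivAt (fun t => 2 * D * t / (1 + (x * t) ^ 2 - 2 * (x * t) * c) - 1)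
      (2 * D * (1 - (x * τ) ^ 2) / q ^ 2) τ := by
    have hq' : HasDerivAt (fun t => 1 + (x * t) ^ 2 - 2 * (x * t) * c)
        (2 * x * (x * τ) - 2 * x * c) τ :=
      (((((hasDerivAt_id' τ).const_mul x).pow 2).const_add 1).sub
        ((((hasDerivAt_id' τ).const_mul x).const_mul 2).mul_const c)).congr_deriv (by ring)
    refine ((((hasDerivAt_id' τ).const_mul (2 * D)).div hq' hq.ne').sub_const 1).congr_deriv ?_
    simp only [q]
    ring
  -- `1 - g` and `1 + g` factor, which places `g` in `(-1, 1)` and makes `√(1 - g²)` explicit.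
  have hqD : q - D * τ = (1 - τ) * (1 - x ^ 2 * τ) := by simp only [q, D]; ring
  have hsub : 1 - g = 2 * ((1 - τ) * (1 - x ^ 2 * τ)) / q := by
    rw [← hqD]; simp only [g]; field_simp; ring
  have hadd : 1 + g = 2 * (D * τ) / q := by
    simp only [g]; field_simp; ring
  have hg_lt : g < 1 := by
    have : 0 < 2 * ((1 - τ) * (1 - x ^ 2 * τ)) / q := div_pos (by nlinarith) hq
    linarith
  have hg_gt : -1 < g := by
    have : 0 < 2 * (D * τ) / q := div_pos (by positivity) hq
    linarith
  have hsqrt : √(1 - g ^ 2) = 2 * √D * √((1 - τ) * τ) * √(1 - x ^ 2 * τ) / q := by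
    rw [← sqrt_sq (by positivity : 0 ≤ 2 * √D * √((1 - τ) * τ) * √(1 - x ^ 2 * τ) / q)]
    congr 1
    rw [div_pow, mul_pow, mul_pow, mul_pow, sq_sqrt hD.le, sq_sqrt hA.le, sq_sqrt hB.le,
      show 1 - g ^ 2 = (1 - g) * (1 + g) by ring, hsub, hadd]
    field_simp
  refine ((hasDerivAt_arcsin hg_gt.ne' hg_lt.ne).comp τ hg').congr_deriv ?_
  rw [hsqrt, rpow_neg_one_div_two_eq_inv_sqrt hA.le, rpow_neg_one_div_two_eq_inv_sqrt hB.le]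
  field_simp
  rw [sq_sqrt hD.le]

lemma poisson_arcsin_integrand_nonneg (hx : |x| < 1) (hc : |c| ≤ 1) {τ : ℝ}
    (hτ : τ ∈ Set.Icc (0 : ℝ) 1) :
    0 ≤ ((1 - τ) * τ) ^ (-(1 : ℝ) / 2) * (1 - x ^ 2 * τ) ^ (-(1 : ℝ) / 2) *
      ((1 - (x * τ) ^ 2) / (1 + (x * τ) ^ 2 - 2 * (x * τ) * c)) := by
  have hxτ := abs_mul_lt_one_of_mem_Icc hx hτ
  have hq := one_add_sq_sub_two_mul_pos hxτ hc
  have hnum : 0 ≤ 1 - (x * τ) ^ 2 := by nlinarith [sq_abs (x * τ), abs_nonneg (x * τ)]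
  have hA : 0 ≤ (1 - τ) * τ := mul_nonneg (by linarith [hτ.2]) hτ.1
  have hB : 0 ≤ 1 - x ^ 2 * τ := by nlinarith [sq_abs x, abs_nonneg x, hτ.1, hτ.2]
  exact mul_nonneg (mul_nonneg (rpow_nonneg hA _) (rpow_nonneg hB _)) (div_nonneg hnum hq.le)

lemma intervalIntegrable_poisson_arcsin (hx : |x| < 1) (hc : |c| ≤ 1) :
    IntervalIntegrable
      (fun τ => ((1 - τ) * τ) ^ (-(1 : ℝ) / 2) * (1 - x ^ 2 * τ) ^ (-(1 : ℝ) / 2) *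
        ((1 - (x * τ) ^ 2) / (1 + (x * τ) ^ 2 - 2 * (x * τ) * c))) MeasureTheory.volume 0 1 := by
  have hsD : 0 < √(1 + x ^ 2 - 2 * x * c) := sqrt_pos.2 (one_add_sq_sub_two_mul_pos hx hc)
  have h := intervalIntegral.integrableOn_deriv_of_nonneg (continuousOn_arcsin_poisson hx hc)
    (fun τ hτ => hasDerivAt_arcsin_poisson hx hc hτ) fun τ hτ =>
      mul_nonneg hsD.le (poisson_arcsin_integrand_nonneg hx hc (Set.Ioo_subset_Icc_self hτ))
  rw [← intervalIntegrable_iff_integrableOn_Ioc_of_le zero_le_one] at h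
  convert h.const_mul (√(1 + x ^ 2 - 2 * x * c))⁻¹ using 1
  funext τ
  rw [inv_mul_cancel_left₀ hsD.ne']

theorem integral_poisson_arcsin (hx : |x| < 1) (hc : |c| ≤ 1) :
    ∫ τ in (0 : ℝ)..1, ((1 - τ) * τ) ^ (-(1 : ℝ) / 2) * (1 - x ^ 2 * τ) ^ (-(1 : ℝ) / 2) *
      ((1 - (x * τ) ^ 2) / (1 + (x * τ) ^ 2 - 2 * (x * τ) * c))
      = π * (1 + x ^ 2 - 2 * x * c) ^ (-(1 : ℝ) / 2) := by
  have hD := one_add_sq_sub_two_mul_pos hx hc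
  have hsD : 0 < √(1 + x ^ 2 - 2 * x * c) := sqrt_pos.2 hD
  have hFTC := intervalIntegral.integral_eq_sub_of_hasDerivAt_of_le zero_le_one
    (continuousOn_arcsin_poisson hx hc) (fun τ hτ => hasDerivAt_arcsin_poisson hx hc hτ)
    ((intervalIntegrable_poisson_arcsin hx hc).const_mul _)
  have h1 : 2 * (1 + x ^ 2 - 2 * x * c) * 1 / (1 + (x * 1) ^ 2 - 2 * (x * 1) * c) - 1 = 1 := by
    field_simp; ring
  rw [intervalIntegral.integral_const_mul, h1] at hFTC
  rw [rpow_neg_one_div_two_eq_inv_sqrt hD.le, eq_mul_inv_iff_mul_eq₀ hsD.ne', mul_comm, hFTC]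
  norm_num

end ArcsinIntegral

/-- Integral representation of `V_n(x,θ)` for `0 ≤ x < 1`. -/
theorem VN_integral_repr (n : ℕ) (hn : 2 ≤ n) (x θ : ℝ) (hx0 : 0 ≤ x) (hx1 : x < 1) :
    VN n x θ = (1 / Real.pi) * ∫ τ in (0:ℝ)..1,
      ((1 - τ) * τ) ^ (-(1:ℝ)/2) * (1 - x ^ 2 * τ) ^ (-(1:ℝ)/2) *
        ((1 - (x * τ) ^ (2 * n)) /
          (1 + (x * τ) ^ (2 * n) - 2 * (x * τ) ^ n * Real.cos (n * θ))) := by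
  have hx : |x| < 1 := abs_lt.2 ⟨by linarith, hx1⟩
  have hn0 : n ≠ 0 := by omega
  set w : ℝ → ℝ := fun τ => ((1 - τ) * τ) ^ (-(1 : ℝ) / 2) * (1 - x ^ 2 * τ) ^ (-(1 : ℝ) / 2)
  set P : ℝ → ℝ → ℝ := fun r c => (1 - r ^ 2) / (1 + r ^ 2 - 2 * r * c)
  set φ : ℕ → ℝ := fun j => 2 * π * j / n + θ
  have hterm (j : ℕ) : (1 + x ^ 2 - 2 * x * cos (φ j)) ^ (-(1 : ℝ) / 2)
      = π⁻¹ * ∫ τ in (0 : ℝ)..1, w τ * P (x * τ) (cos (φ j)) := by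
    rw [integral_poisson_arcsin hx (abs_cos_le_one _), inv_mul_cancel_left₀ pi_ne_zero]
  have havg : ∀ τ ∈ Set.uIcc (0 : ℝ) 1, (1 / n : ℝ) * ∑ j ∈ Icc 1 n, w τ * P (x * τ) (cos (φ j))
      = w τ * P ((x * τ) ^ n) (cos (n * θ)) := fun τ hτ => by
    rw [Set.uIcc_of_le zero_le_one] at hτ
    rw [← mul_sum, sum_Icc_poisson_eq_mul_poisson_pow hn0 (abs_mul_lt_one_of_mem_Icc hx hτ) θ]
    simp only [P]
    field_simp
  calc VN n x θ
      = (1 / n : ℝ) * ∑ j ∈ Icc 1 n, π⁻¹ * ∫ τ in (0 : ℝ)..1, w τ * P (x * τ) (cos (φ j)) := by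
        rw [VN]
        exact congrArg _ (sum_congr rfl fun j _ => hterm j)
    _ = π⁻¹ * ∫ τ in (0 : ℝ)..1, (1 / n : ℝ) * ∑ j ∈ Icc 1 n, w τ * P (x * τ) (cos (φ j)) := by
        rw [← mul_sum, intervalIntegral.integral_const_mul, intervalIntegral.integral_finsetSum
          fun j _ => intervalIntegrable_poisson_arcsin hx (abs_cos_le_one _)]
        ring
    _ = _ := by
        rw [intervalIntegral.integral_congr havg, one_div]
        simp only [w, P, ← pow_mul, mul_comm 2 n]
end

section
/- For every integer n ≥ 2, k_n(1, π/n) + δ_n = 2·δ_{2n} and k_n(1, π/n) − δ_n = 2·(δ_{2n} − δ_n); moreover k_n(1, π/n) − δ_n > 0. -/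
/-! At `x = 1` the summand of `h_n` at angle `2t` collapses to `1 / (4 sin t)`, and with
`θ = π/n` the angles `t` are the odd multiples of `π/(2n)`. Writing
`g m = 1 / sin (π m/(2n))` (`invSinPiDiv (2 * n) m`), `k_n(1, π/n) + 1` is `1/(4n)` times the
sum of `g` over odd `m < 2n`, `δ_n + 1` the same over even `m`, and `δ_{2n} + 1` is `1/(8n)`
times the sum over all `m`; the two identities are then linear algebra. Positivity says that
the odd sum exceeds the even one, which follows from the convexity of `1 / sin` on `(0, π)`:
each even-indexed term is at most the mean of its two neighbours. -/

open Finset Real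

theorem Finset.sum_Icc_one_eq_sum_range_succ {M : Type*} [AddCommMonoid M] (f : ℕ → M)
    (n : ℕ) :
    ∑ l ∈ Icc 1 n, f l = ∑ i ∈ range n, f (i + 1) := by
  rw [range_eq_Ico, sum_Ico_add' f, zero_add, Ico_add_one_right_eq_Icc]

theorem Finset.sum_Icc_one_eq_sum_range_of_apply_eq {M : Type*} [AddCancelCommMonoid M]
    (f : ℕ → M) {n : ℕ} (h : f n = f 0) :
    ∑ l ∈ Icc 1 n, f l = ∑ l ∈ range n, f l := by
  have := sum_range_succ f n
  rw [sum_range_succ', h, ← sum_Icc_one_eq_sum_range_succ] at this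
  exact add_right_cancel this

theorem Finset.sum_Icc_one_sub_one_eq_sum_range {M : Type*} [AddCommMonoid M] (f : ℕ → M)
    (h : f 0 = 0) (n : ℕ) : ∑ l ∈ Icc 1 (n - 1), f l = ∑ l ∈ range n, f l := by
  cases n with
  | zero => simp
  | succ k =>
    rw [sum_range_succ', h, add_zero, ← sum_Icc_one_eq_sum_range_succ, Nat.add_sub_cancel]

theorem Finset.sum_range_two_mul {M : Type*} [AddCommMonoid M] (f : ℕ → M) (n : ℕ) :
    ∑ m ∈ range (2 * n), f m =
      ∑ l ∈ range n, f (2 * l) + ∑ l ∈ range n, f (2 * l + 1) := by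
  induction n with
  | zero => simp
  | succ n ih =>
    rw [show 2 * (n + 1) = 2 * n + 1 + 1 by ring, sum_range_succ, sum_range_succ, ih,
      sum_range_succ, sum_range_succ]
    abel

theorem four_div_add_le_one_div_add_one_div {p q : ℝ} (hp : 0 < p) (hq : 0 < q) :
    4 / (p + q) ≤ 1 / p + 1 / q := by
  rw [div_add_div _ _ hp.ne' hq.ne', div_le_div_iff₀ (by positivity) (by positivity)]
  nlinarith [sq_nonneg (p - q)]

theorem two_div_sin_le_one_div_sin_add_one_div_sin {a b : ℝ} (ha : a ∈ Set.Ioo 0 π)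
    (hb : b ∈ Set.Ioo 0 π) : 2 / sin ((a + b) / 2) ≤ 1 / sin a + 1 / sin b := by
  have hsa := sin_pos_of_mem_Ioo ha
  have hsb := sin_pos_of_mem_Ioo hb
  have hmid : 0 < sin ((a + b) / 2) :=
    sin_pos_of_pos_of_lt_pi (by linarith [ha.1, hb.1]) (by linarith [ha.2, hb.2])
  have hsum : sin a + sin b ≤ 2 * sin ((a + b) / 2) := by
    rw [sin_add_sin]
    nlinarith [cos_le_one ((a - b) / 2)]
  calc 2 / sin ((a + b) / 2) = 4 / (2 * sin ((a + b) / 2)) := by field_simp; norm_num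
    _ ≤ 4 / (sin a + sin b) := by gcongr
    _ ≤ 1 / sin a + 1 / sin b := four_div_add_le_one_div_add_one_div hsa hsb

theorem one_sub_cos_two_mul_div_rpow {t : ℝ} (ht : 0 < sin t) :
    (1 - cos (2 * t)) / (2 - 2 * cos (2 * t)) ^ ((3 : ℝ) / 2) = 1 / (4 * sin t) := by
  have hsq : 1 - cos (2 * t) = 2 * sin t ^ 2 := by rw [cos_two_mul, cos_sq']; ring
  have hpow : (2 - 2 * cos (2 * t)) ^ ((3 : ℝ) / 2) = (2 * sin t) ^ 3 := by
    rw [show 2 - 2 * cos (2 * t) = (2 * sin t) ^ 2 by linarith, ← rpow_natCast,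
      ← rpow_mul (by positivity), ← rpow_natCast]
    norm_num
  rw [hsq, hpow]
  field_simp
  ring

noncomputable def invSinPiDiv (N m : ℕ) : ℝ := 1 / sin (π * m / N)

-- `sin 0 = 0` and `1 / 0 = 0`: this is what lets the `l = 0` term join the sums of `deltaN`.
@[simp] theorem invSinPiDiv_zero (N : ℕ) : invSinPiDiv N 0 = 0 := by simp [invSinPiDiv]

theorem invSinPiDiv_mul_mul {k : ℕ} (hk : k ≠ 0) (N m : ℕ) :
    invSinPiDiv (k * N) (k * m) = invSinPiDiv N m := by
  rw [invSinPiDiv, invSinPiDiv]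
  push_cast
  rw [mul_left_comm, mul_div_mul_left _ _ (by exact_mod_cast hk)]

theorem pi_mul_div_mem_Ioo_s7 {N m : ℕ} (h₀ : 0 < m) (hN : m < N) :
    π * m / N ∈ Set.Ioo 0 π := by
  have hm : (0 : ℝ) < m := by exact_mod_cast h₀
  have hmN : (m : ℝ) < N := by exact_mod_cast hN
  refine ⟨div_pos (mul_pos pi_pos hm) (hm.trans hmN), ?_⟩
  rw [div_lt_iff₀ (hm.trans hmN)]
  nlinarith [pi_pos]

theorem invSinPiDiv_pos {N m : ℕ} (h₀ : 0 < m) (hN : m < N) : 0 < invSinPiDiv N m :=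
  one_div_pos.mpr <| sin_pos_of_mem_Ioo <| pi_mul_div_mem_Ioo_s7 h₀ hN

theorem two_mul_invSinPiDiv_le {N m : ℕ} (h₀ : 0 < m) (hN : m + 2 < N) :
    2 * invSinPiDiv N (m + 1) ≤ invSinPiDiv N m + invSinPiDiv N (m + 2) := by
  have hmid : π * ((m + 1 : ℕ) : ℝ) / N =
      (π * m / N + π * ((m + 2 : ℕ) : ℝ) / N) / 2 := by
    push_cast; ring
  rw [invSinPiDiv, hmid, mul_one_div]
  exact two_div_sin_le_one_div_sin_add_one_div_sin (pi_mul_div_mem_Ioo_s7 (N := N) h₀ (by omega))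
    (pi_mul_div_mem_Ioo_s7 (by omega) hN)

theorem deltaN_eq_sum_range (n : ℕ) :
    deltaN n = 1 / (4 * n) * ∑ l ∈ range n, invSinPiDiv n l - 1 := by
  rw [deltaN, ← sum_Icc_one_sub_one_eq_sum_range _ (invSinPiDiv_zero n)]
  rfl

theorem sum_invSinPiDiv_even_lt_sum_odd {n : ℕ} (hn : n ≠ 0) :
    ∑ l ∈ range n, invSinPiDiv (2 * n) (2 * l) <
      ∑ l ∈ range n, invSinPiDiv (2 * n) (2 * l + 1) := by
  obtain ⟨k, rfl⟩ : ∃ k, n = k + 1 := ⟨n - 1, by omega⟩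
  set f := invSinPiDiv (2 * (k + 1))
  have hconv : ∑ i ∈ range k, 2 * f (2 * (i + 1)) ≤
      ∑ i ∈ range k, (f (2 * i + 1) + f (2 * (i + 1) + 1)) :=
    sum_le_sum fun i hi ↦
      two_mul_invSinPiDiv_le (m := 2 * i + 1) (by omega) (by simp at hi; omega)
  rw [← mul_sum, sum_add_distrib] at hconv
  have hE := sum_range_succ' (fun l ↦ f (2 * l)) k
  have hO := sum_range_succ (fun l ↦ f (2 * l + 1)) k
  have hO' := sum_range_succ' (fun l ↦ f (2 * l + 1)) k
  have h₁ : 0 < f 1 := invSinPiDiv_pos one_pos (by omega)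
  have h₂ : 0 < f (2 * k + 1) := invSinPiDiv_pos (by omega) (by omega)
  simp only [mul_zero, zero_add, add_zero, invSinPiDiv_zero, f] at hE hO hO' h₁ h₂ hconv ⊢
  linarith

theorem hN_one_pi_div {n : ℕ} (hn : n ≠ 0) :
    hN n 1 (π / n) = 1 / (4 * n) * ∑ l ∈ range n, invSinPiDiv (2 * n) (2 * l + 1) := by
  have hn' : (n : ℝ) ≠ 0 := by exact_mod_cast hn
  rw [hN, sum_Icc_one_eq_sum_range_of_apply_eq, mul_sum, mul_sum]
  · refine sum_congr rfl fun l hl ↦ ?_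
    have harg :
        2 * π * l / n + π / n = 2 * (π * ((2 * l + 1 : ℕ) : ℝ) / ((2 * n : ℕ) : ℝ)) := by
      push_cast; field_simp
    have hsin := sin_pos_of_mem_Ioo (pi_mul_div_mem_Ioo_s7 (N := 2 * n) (m := 2 * l + 1) (by omega)
      (by simp at hl; omega))
    rw [harg, one_pow, one_mul, mul_one, one_add_one_eq_two, one_sub_cos_two_mul_div_rpow hsin,
      invSinPiDiv]
    field_simp
  · rw [show 2 * π * n / n + π / n = 2 * π * ((0 : ℕ) : ℝ) / n + π / n + 2 * π by
      push_cast; field_simp; ring, cos_add_two_pi]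

/-- `k_n(1,π/n) + δ_n = 2δ_{2n}`, `k_n(1,π/n) − δ_n = 2(δ_{2n} − δ_n)` and the latter is
positive. -/
theorem kN_one_shift_relations (n : ℕ) (hn : 2 ≤ n) :
    kN n 1 (Real.pi / n) + deltaN n = 2 * deltaN (2 * n) ∧
    kN n 1 (Real.pi / n) - deltaN n = 2 * (deltaN (2 * n) - deltaN n) ∧
    0 < kN n 1 (Real.pi / n) - deltaN n := by
  have hn₀ : n ≠ 0 := by omega
  set E := ∑ l ∈ range n, invSinPiDiv (2 * n) (2 * l)
  set O := ∑ l ∈ range n, invSinPiDiv (2 * n) (2 * l + 1)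
  have hk : kN n 1 (π / n) = 1 / (4 * n) * O - 1 := by rw [kN, hN_one_pi_div hn₀]
  have hδ : deltaN n = 1 / (4 * n) * E - 1 := by
    simp_rw [deltaN_eq_sum_range, E, invSinPiDiv_mul_mul two_ne_zero]
  have hδ₂ : deltaN (2 * n) = 1 / (8 * n) * (E + O) - 1 := by
    rw [deltaN_eq_sum_range, sum_range_two_mul]
    push_cast
    ring
  have hEO : E < O := sum_invSinPiDiv_even_lt_sum_odd hn₀
  refine ⟨?_, ?_, ?_⟩
  · rw [hk, hδ, hδ₂]; ring
  · rw [hk, hδ, hδ₂]; ring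
  · calc 0 < 1 / (4 * (n : ℝ)) * (O - E) := mul_pos (by positivity) (sub_pos.mpr hEO)
      _ = _ := by rw [hk, hδ]; ring
end

section
/- For every integer n ≥ 2: if 0 ≤ x < 1 then k_n(x, 0) − k_n(x, π/n) ≥ 0, and if x > 1 then k_n(x, 0) − k_n(x, π/n) ≤ 0. -/
open Finset Complex
open scoped ComplexConjugate Real

lemma Real.multichoose_eq_div (r : ℝ) (n : ℕ) :
    Ring.multichoose r n = (ascPochhammer ℝ n).eval r / n.factorial := by
  rw [eq_div_iff (by positivity), mul_comm, ← nsmul_eq_mul,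
    Ring.factorial_nsmul_multichoose_eq_ascPochhammer, Polynomial.ascPochhammer_smeval_eq_eval]

lemma Real.multichoose_pos {r : ℝ} (hr : 0 < r) (n : ℕ) : 0 < Ring.multichoose r n := by
  rw [Real.multichoose_eq_div]
  exact div_pos (ascPochhammer_pos n r hr) (by positivity)

lemma Real.multichoose_le_multichoose {r s : ℝ} (hr : 0 ≤ r) (hrs : r ≤ s) (n : ℕ) :
    Ring.multichoose r n ≤ Ring.multichoose s n := by
  have asc_eq_desc (t : ℝ) :
      (ascPochhammer ℝ n).eval t = (descPochhammer ℝ n).eval (t + n - 1) := by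
    rw [descPochhammer_eval_eq_ascPochhammer]
    ring_nf
  simp only [Real.multichoose_eq_div, asc_eq_desc]
  gcongr
  exact monotoneOn_descPochhammer_eval n (by simp; linarith) (by simp; linarith) (by linarith)

@[norm_cast]
lemma Complex.ofReal_multichoose (a : ℝ) (n : ℕ) :
    ((Ring.multichoose a n : ℝ) : ℂ) = Ring.multichoose (a : ℂ) n :=
  Ring.map_multichoose (algebraMap ℝ ℂ) _ _

theorem Complex.hasSum_multichoose_mul_pow (a : ℝ) {z : ℂ} (hz : ‖z‖ < 1) :
    HasSum (fun n ↦ ((Ring.multichoose a n : ℝ) : ℂ) * z ^ n) (1 / (1 - z) ^ (a : ℂ)) := by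
  have := (one_div_one_sub_cpow_hasFPowerSeriesOnBall_zero (a : ℂ)).hasSum
    (y := z) (by simpa [← ofReal_norm] using hz)
  simp_rw [Complex.ofReal_multichoose, Ring.multichoose_eq]
  simpa [FormalMultilinearSeries.ofScalars_apply_eq, mul_comm] using this

lemma Real.summable_multichoose_mul_pow (a : ℝ) {u : ℝ} (hu0 : 0 ≤ u) (hu1 : u < 1) :
    Summable fun n ↦ Ring.multichoose a n * u ^ n := by
  have := (Complex.hasSum_multichoose_mul_pow a (z := u) (by simpa [abs_of_nonneg hu0])).summable
  exact_mod_cast this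

theorem IsPrimitiveRoot.sum_Icc_zpow_pow {K : Type*} [Field K] {ζ : K} {n : ℕ}
    (hζ : IsPrimitiveRoot ζ n) (m : ℤ) :
    ∑ l ∈ Icc 1 n, (ζ ^ m) ^ l = if (n : ℤ) ∣ m then (n : K) else 0 := by
  split_ifs with hm
  · simp [(hζ.zpow_eq_one_iff_dvd m).mpr hm]
  · have hw : ζ ^ m ≠ 1 := fun h ↦ hm ((hζ.zpow_eq_one_iff_dvd m).mp h)
    have hwn : (ζ ^ m) ^ n = 1 := by
      rw [← zpow_natCast, ← zpow_mul, mul_comm, zpow_mul, zpow_natCast, hζ.pow_eq_one,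
        one_zpow]
    rw [← Ico_add_one_right_eq_Icc, sum_Ico_eq_sub _ (by omega), geom_sum_eq hw, pow_succ, hwn,
      one_mul, div_self (sub_ne_zero.mpr hw)]
    simp

theorem Real.sum_Icc_cos_int_mul {n : ℕ} (hn : n ≠ 0) (m : ℤ) (θ : ℝ) :
    ∑ l ∈ Icc 1 n, Real.cos (m * (2 * π * l / n + θ))
      = if (n : ℤ) ∣ m then n * Real.cos (m * θ) else 0 := by
  have hζ := Complex.isPrimitiveRoot_exp n hn
  have term (l : ℕ) : Real.cos (m * (2 * π * l / n + θ))
      = (Complex.exp ((m * θ : ℝ) * I) * (Complex.exp (2 * π * I / n) ^ m) ^ l).re := by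
    rw [← zpow_natCast, ← zpow_mul, ← Complex.exp_int_mul, ← Complex.exp_add,
      ← Complex.exp_ofReal_mul_I_re]
    push_cast
    ring_nf
  simp_rw [term, ← Complex.re_sum, ← mul_sum, hζ.sum_Icc_zpow_pow m]
  split_ifs
  · rw [mul_comm, ← ofReal_natCast, re_ofReal_mul, exp_ofReal_mul_I_re]
  · simp

lemma Complex.re_ofReal_mul_exp_pow_mul_conj_pow (u φ : ℝ) (a b : ℕ) :
    ((u * Complex.exp (φ * I)) ^ a * conj ((u * Complex.exp (φ * I)) ^ b)).re
      = u ^ (a + b) * Real.cos ((a - b : ℝ) * φ) := by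
  rw [map_pow, map_mul, conj_ofReal, ← Complex.exp_conj, map_mul, conj_ofReal, conj_I, mul_pow,
    mul_pow, mul_mul_mul_comm, ← pow_add, ← Complex.exp_nat_mul, ← Complex.exp_nat_mul,
    ← Complex.exp_add, ← ofReal_pow, re_ofReal_mul, ← exp_ofReal_mul_I_re]
  push_cast
  ring_nf

noncomputable def reMulConjSeries (c d : ℕ → ℝ) (u φ : ℝ) : ℝ :=
  ((∑' a, c a * (u * Complex.exp (φ * I)) ^ a)
    * conj (∑' b, d b * (u * Complex.exp (φ * I)) ^ b)).re

theorem hasSum_reMulConjSeries {c d : ℕ → ℝ} {u : ℝ} (hu : 0 ≤ u)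
    (hc : Summable fun a ↦ |c a| * u ^ a) (hd : Summable fun b ↦ |d b| * u ^ b) (φ : ℝ) :
    HasSum
      (fun p : ℕ × ℕ ↦ c p.1 * d p.2 * (u ^ (p.1 + p.2) * Real.cos ((p.1 - p.2 : ℝ) * φ)))
      (reMulConjSeries c d u φ) := by
  unfold reMulConjSeries
  set z := u * Complex.exp (φ * I)
  have hz : ‖z‖ = u := by simp [z, abs_of_nonneg hu]
  have hc' : Summable fun a ↦ ‖(c a : ℂ) * z ^ a‖ := by simpa [hz] using hc
  have hd' : Summable fun b ↦ ‖conj ((d b : ℂ) * z ^ b)‖ := by simpa [hz] using hd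
  rw [conj_tsum, tsum_mul_tsum_of_summable_norm hc' hd']
  convert (Complex.hasSum_re (summable_mul_of_summable_norm hc' hd').hasSum) using 2 with p
  simp only [map_mul, conj_ofReal]
  rw [show (c p.1 : ℂ) * z ^ p.1 * (d p.2 * conj (z ^ p.2))
      = ((c p.1 * d p.2 : ℝ) : ℂ) * (z ^ p.1 * conj (z ^ p.2)) by push_cast; ring,
    re_ofReal_mul, re_ofReal_mul_exp_pow_mul_conj_pow]

noncomputable def sampleAvg (n : ℕ) (F : ℝ → ℝ) (θ : ℝ) : ℝ :=
  (1 / (n : ℝ)) * ∑ l ∈ Icc 1 n, F (2 * π * l / n + θ)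

lemma sampleAvg_const_mul (n : ℕ) (k : ℝ) (F : ℝ → ℝ) (θ : ℝ) :
    sampleAvg n (fun φ ↦ k * F φ) θ = k * sampleAvg n F θ := by
  simp only [sampleAvg, ← mul_sum]
  ring

theorem hasSum_sampleAvg_reMulConjSeries {n : ℕ} (hn : n ≠ 0) {c d : ℕ → ℝ} {u : ℝ}
    (hu : 0 ≤ u) (hc : Summable fun a ↦ |c a| * u ^ a) (hd : Summable fun b ↦ |d b| * u ^ b)
    (θ : ℝ) :
    HasSum (fun p : ℕ × ℕ ↦ c p.1 * d p.2 * (u ^ (p.1 + p.2) *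
        if (n : ℤ) ∣ (p.1 : ℤ) - p.2 then Real.cos ((p.1 - p.2 : ℝ) * θ) else 0))
      (sampleAvg n (reMulConjSeries c d u) θ) := by
  unfold sampleAvg
  refine ((hasSum_sum (s := Icc 1 n) fun l _ ↦ hasSum_reMulConjSeries hu hc hd
    (2 * π * l / n + θ)).mul_left (1 / (n : ℝ))).congr_fun fun p ↦ ?_
  have hcos := Real.sum_Icc_cos_int_mul hn ((p.1 : ℤ) - p.2) θ
  push_cast at hcos
  simp_rw [← mul_sum, hcos]
  split_ifs
  · field_simp
  · simp

theorem sampleAvg_reMulConjSeries_sub_nonneg {n : ℕ} (hn : n ≠ 0) {c d : ℕ → ℝ} {u : ℝ}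
    (hu : 0 ≤ u) (hc0 : ∀ a, 0 ≤ c a) (hd0 : ∀ b, 0 ≤ d b)
    (hc : Summable fun a ↦ c a * u ^ a) (hd : Summable fun b ↦ d b * u ^ b) :
    0 ≤ sampleAvg n (reMulConjSeries c d u) 0 - sampleAvg n (reMulConjSeries c d u) (π / n) := by
  have hc' := hc.congr fun a ↦ by rw [← abs_of_nonneg (hc0 a)]
  have hd' := hd.congr fun b ↦ by rw [← abs_of_nonneg (hd0 b)]
  refine ((hasSum_sampleAvg_reMulConjSeries hn hu hc' hd' 0).sub
    (hasSum_sampleAvg_reMulConjSeries hn hu hc' hd' (π / n))).nonneg fun p ↦ ?_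
  rw [← mul_sub, ← mul_sub]
  have hweight :
      0 ≤ (if (n : ℤ) ∣ (p.1 : ℤ) - p.2 then Real.cos ((p.1 - p.2 : ℝ) * 0) else 0)
      - if (n : ℤ) ∣ (p.1 : ℤ) - p.2 then Real.cos ((p.1 - p.2 : ℝ) * (π / n)) else 0 := by
    split_ifs
    · simp [Real.cos_le_one]
    · simp
  have := hc0 p.1
  have := hd0 p.2
  positivity

lemma Complex.one_sub_ne_zero_of_norm_lt_one {z : ℂ} (hz : ‖z‖ < 1) : 1 - z ≠ 0 :=
  sub_ne_zero.mpr fun h ↦ by simp [← h] at hz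

lemma Complex.norm_ofReal_mul_exp_lt_one {u : ℝ} (hu0 : 0 ≤ u) (hu1 : u < 1) (φ : ℝ) :
    ‖(u : ℂ) * Complex.exp (φ * I)‖ < 1 := by
  simpa [abs_of_nonneg hu0]

lemma Complex.re_one_sub_ofReal_mul_exp (u φ : ℝ) :
    (1 - u * Complex.exp (φ * I)).re = 1 - u * Real.cos φ := by
  simp [exp_ofReal_mul_I_re]

lemma Complex.sq_norm_one_sub_ofReal_mul_exp (u φ : ℝ) :
    ‖1 - u * Complex.exp (φ * I)‖ ^ 2 = 1 + u ^ 2 - 2 * u * Real.cos φ := by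
  rw [Complex.sq_norm, normSq_apply, re_one_sub_ofReal_mul_exp]
  simp only [sub_im, one_im, mul_im, ofReal_re, ofReal_im, exp_ofReal_mul_I_im,
    exp_ofReal_mul_I_re]
  linear_combination u ^ 2 * Real.sin_sq_add_cos_sq φ

lemma Complex.sq_norm_one_div_cpow_half (w : ℂ) :
    ‖1 / w ^ ((1 / 2 : ℝ) : ℂ)‖ ^ 2 = ‖w‖⁻¹ := by
  rw [norm_div, norm_one, norm_cpow_real, div_pow, ← Real.rpow_mul_natCast (norm_nonneg w)]
  norm_num

lemma Complex.re_one_div_cpow_half_mul_conj_self (w : ℂ) :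
    (1 / w ^ ((1 / 2 : ℝ) : ℂ) * conj (1 / w ^ ((1 / 2 : ℝ) : ℂ))).re = ‖w‖⁻¹ := by
  rw [mul_conj', ← ofReal_pow, ofReal_re, sq_norm_one_div_cpow_half w]

lemma Complex.re_one_div_cpow_half_mul_conj_threeHalves {w : ℂ} (hw : w ≠ 0) :
    (1 / w ^ ((1 / 2 : ℝ) : ℂ) * conj (1 / w ^ ((3 / 2 : ℝ) : ℂ))).re
      = w.re / ‖w‖ ^ 3 := by
  have h : 1 / w ^ ((3 / 2 : ℝ) : ℂ) = 1 / w ^ ((1 / 2 : ℝ) : ℂ) * w⁻¹ := by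
    rw [show ((3 / 2 : ℝ) : ℂ) = ((1 / 2 : ℝ) : ℂ) + 1 by push_cast; norm_num,
      cpow_add _ _ hw, cpow_one]
    ring
  rw [h, map_mul, ← mul_assoc, mul_conj', ← ofReal_pow, re_ofReal_mul,
    sq_norm_one_div_cpow_half w, conj_re, inv_re, normSq_eq_norm_sq]
  ring

lemma Real.sq_rpow_three_div_two {r : ℝ} (hr : 0 ≤ r) : (r ^ 2) ^ ((3 : ℝ) / 2) = r ^ 3 := by
  rw [← Real.rpow_natCast, ← Real.rpow_mul hr]
  norm_num

noncomputable def hNKernel (x φ : ℝ) : ℝ :=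
  (1 - x * Real.cos φ) / (1 + x ^ 2 - 2 * x * Real.cos φ) ^ ((3 : ℝ) / 2)

lemma kN_sub_kN (n : ℕ) (x θ θ' : ℝ) :
    kN n x θ - kN n x θ' = sampleAvg n (hNKernel x) θ - sampleAvg n (hNKernel x) θ' :=
  sub_sub_sub_cancel_right _ _ _

lemma hNKernel_eq_reMulConjSeries {u : ℝ} (hu0 : 0 ≤ u) (hu1 : u < 1) :
    hNKernel u
      = reMulConjSeries (Ring.multichoose (1 / 2 : ℝ)) (Ring.multichoose (3 / 2 : ℝ)) u := by
  funext φ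
  have hz := Complex.norm_ofReal_mul_exp_lt_one hu0 hu1 φ
  rw [hNKernel, reMulConjSeries, (Complex.hasSum_multichoose_mul_pow (1 / 2) hz).tsum_eq,
    (Complex.hasSum_multichoose_mul_pow (3 / 2) hz).tsum_eq,
    Complex.re_one_div_cpow_half_mul_conj_threeHalves (Complex.one_sub_ne_zero_of_norm_lt_one hz),
    Complex.re_one_sub_ofReal_mul_exp, ← Complex.sq_norm_one_sub_ofReal_mul_exp,
    Real.sq_rpow_three_div_two (norm_nonneg _)]

lemma hNKernel_eq_neg_inv_mul_reMulConjSeries {x : ℝ} (hx : 1 < x) :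
    hNKernel x = fun φ ↦ -x⁻¹ * reMulConjSeries (Ring.multichoose (1 / 2 : ℝ))
      (Ring.multichoose (3 / 2 : ℝ) - Ring.multichoose (1 / 2 : ℝ)) x⁻¹ φ := by
  funext φ
  have hx0 : 0 < x := by linarith
  have hz :=
    Complex.norm_ofReal_mul_exp_lt_one (inv_nonneg.mpr hx0.le) (inv_lt_one_of_one_lt₀ hx) φ
  have hw := Complex.one_sub_ne_zero_of_norm_lt_one hz
  have hP := Complex.hasSum_multichoose_mul_pow (1 / 2) hz
  have hQP := (Complex.hasSum_multichoose_mul_pow (3 / 2) hz).sub hP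
  simp_rw [← sub_mul, ← ofReal_sub, ← Pi.sub_apply] at hQP
  have hD : 1 + x ^ 2 - 2 * x * Real.cos φ
      = (x * ‖1 - (x⁻¹ : ℝ) * Complex.exp (φ * I)‖) ^ 2 := by
    rw [mul_pow, Complex.sq_norm_one_sub_ofReal_mul_exp]
    field_simp
    ring
  rw [hNKernel, reMulConjSeries, hP.tsum_eq, hQP.tsum_eq, map_sub, mul_sub, sub_re,
    Complex.re_one_div_cpow_half_mul_conj_threeHalves hw,
    Complex.re_one_div_cpow_half_mul_conj_self, Complex.re_one_sub_ofReal_mul_exp, hD,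
    Real.sq_rpow_three_div_two (by positivity)]
  have hr := norm_ne_zero_iff.mpr hw
  generalize ‖1 - (x⁻¹ : ℝ) * Complex.exp (φ * I)‖ = r at hD hr ⊢
  field_simp
  linear_combination hD

/-- `k_n(x,0) − k_n(x,π/n)` is `≥ 0` on `[0,1)` and `≤ 0` on `(1,∞)`. -/
theorem kN_diff_sign (n : ℕ) (hn : 2 ≤ n) (x : ℝ) :
    (0 ≤ x → x < 1 → 0 ≤ kN n x 0 - kN n x (Real.pi / n)) ∧
    (1 < x → kN n x 0 - kN n x (Real.pi / n) ≤ 0) := by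
  have hn0 : n ≠ 0 := by omega
  have hβ0 (a : ℕ) : 0 ≤ Ring.multichoose (1 / 2 : ℝ) a :=
    (Real.multichoose_pos (by norm_num) a).le
  rw [kN_sub_kN]
  refine ⟨fun hx0 hx1 ↦ ?_, fun hx ↦ ?_⟩
  · have hγ0 (b : ℕ) : 0 ≤ Ring.multichoose (3 / 2 : ℝ) b :=
      (Real.multichoose_pos (by norm_num) b).le
    rw [hNKernel_eq_reMulConjSeries hx0 hx1]
    exact sampleAvg_reMulConjSeries_sub_nonneg hn0 hx0 hβ0 hγ0
      (Real.summable_multichoose_mul_pow _ hx0 hx1) (Real.summable_multichoose_mul_pow _ hx0 hx1)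
  · have hu0 : 0 ≤ x⁻¹ := by positivity
    have hu1 : x⁻¹ < 1 := inv_lt_one_of_one_lt₀ hx
    have hβ := Real.summable_multichoose_mul_pow (1 / 2) hu0 hu1
    have hγβ0 (b : ℕ) :
        0 ≤ (Ring.multichoose (3 / 2 : ℝ) - Ring.multichoose (1 / 2 : ℝ)) b :=
      sub_nonneg.mpr (Real.multichoose_le_multichoose (by norm_num) (by norm_num) b)
    have hγβ : Summable fun b ↦
        (Ring.multichoose (3 / 2 : ℝ) - Ring.multichoose (1 / 2 : ℝ)) b * x⁻¹ ^ b :=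
      ((Real.summable_multichoose_mul_pow (3 / 2) hu0 hu1).sub hβ).congr fun b ↦ by
        simp [sub_mul]
    rw [hNKernel_eq_neg_inv_mul_reMulConjSeries hx, sampleAvg_const_mul, sampleAvg_const_mul,
      ← mul_sub]
    exact mul_nonpos_of_nonpos_of_nonneg (by simpa using hu0)
      (sampleAvg_reMulConjSeries_sub_nonneg hn0 hu0 hβ0 hγβ0 hβ hγβ)
end

section
/- Let n ≥ 2 and k ≥ 3 be integers, let 0 < x < 1, and let 1 = α₀ > α₁ > … > α_{k−2} > α_{k−1} = 0 be reals. Then det A_{n;k}(x^{α₀}, x^{α₁}, …, x^{α_{k−2}}) = det A_{n;k}(x^{α₀}, x^{1−α_{k−2}}, …, x^{1−α₁}), where A_{n;k}(x₁, …, x_{k−1}) (with x_k = 1) is the k×k real matrix whose (i,j) entry equals δ_n if i = j and k_n(x_j/x_i) if i ≠ j. -/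
/-- The symmetry `det A_{n;k}(x^{α₀},…,x^{α_{k−2}}) = det A_{n;k}(x^{α₀},x^{1−α_{k−2}},…,x^{1−α_₁})`
for the `k×k` matrix whose `(i,j)` entry is `δ_n` if `i = j` and `k_n(x_j/x_i)` otherwise,
the radii being `x_j = x^{α_j}` with `1 = α₀ > α₁ > … > α_{k−1} = 0`. -/
theorem Ank_symmetry (n k : ℕ) (hn : 2 ≤ n) (hk : 3 ≤ k) (x : ℝ) (hx0 : 0 < x) (hx1 : x < 1)
    (α : Fin k → ℝ) (hanti : ∀ i j : Fin k, i < j → α j < α i)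
    (h0 : α ⟨0, by omega⟩ = 1) (hlast : α ⟨k - 1, by omega⟩ = 0) :
    (Matrix.of fun i j : Fin k =>
        if i = j then deltaN n else kN n (x ^ α j / x ^ α i) 0).det =
    (Matrix.of fun i j : Fin k =>
        if i = j then deltaN n else kN n (x ^ (1 - α j.rev) / x ^ (1 - α i.rev)) 0).det := by
  have key : (Matrix.of fun i j : Fin k =>
        if i = j then deltaN n else kN n (x ^ (1 - α j.rev) / x ^ (1 - α i.rev)) 0) =
      ((Matrix.of fun i j : Fin k =>
        if i = j then deltaN n else kN n (x ^ α j / x ^ α i) 0).submatrix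
        ⇑(Fin.revPerm) ⇑(Fin.revPerm)).transpose := by
    ext i j
    simp only [Matrix.of_apply, Matrix.transpose_apply, Matrix.submatrix_apply,
      Fin.revPerm_apply]
    rcases eq_or_ne i j with h | h
    · simp [h]
    · have h' : j.rev ≠ i.rev := fun hc => h ((Fin.rev_injective hc).symm)
      rw [if_neg h, if_neg h']
      have e1 : x ^ (1 - α j.rev) / x ^ (1 - α i.rev) = x ^ (α i.rev - α j.rev) := by
        rw [← Real.rpow_sub hx0]; ring_nf
      have e2 : x ^ α i.rev / x ^ α j.rev = x ^ (α i.rev - α j.rev) := by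
        rw [← Real.rpow_sub hx0]
      rw [e1, e2]
  rw [key, Matrix.det_transpose, Matrix.det_submatrix_equiv_self]
end
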